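/- Suppose λ_i = i^{-1-γ} for i ≥ 1 with γ > 0, and let κ = κ(λ, M, Σ) be the unique positive solution of λ/κ + (1/M) Σ_{i=1}^∞ λ_i/(λ_i+κ) = 1 with λ ∈ (0,1), M ≥ 1. Then κ = Θ(max(λ, M^{-1-γ})), i.e., there exist constants c, C > 0 depending only on γ such that c·max(λ, M^{-1-γ}) ≤ κ ≤ C·max(λ, M^{-1-γ}). -/

import Mathlib

/-!
Put `x = κ ^ (-1 / (1 + γ))`, so that `λᵢ ≥ κ` exactly for `i ≤ x`, and split
`df(κ) = ∑ᵢ λᵢ / (λᵢ + κ)` at `i ≈ x`. The first `⌊x⌋` terms lie between `1/2` and `1`, and the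
rest is at most `κ⁻¹ ∑_{i > x} λᵢ ≲ x ^ (-γ) / (γ κ) = x / γ` by the integral test; hence
`(x - 1) / 2 ≤ df(κ) ≤ (2 + 1/γ) x`. The fixed-point equation gives `λ ≤ κ` and `df(κ) ≤ M`, the
latter forcing `x ≤ 3 M`; and one of `λ / κ`, `df(κ) / M` is at least `1/2`, which forces
`κ ≤ 2 λ` or `x ≳ M`.
-/

open Real Set

noncomputable def degreesOfFreedom (lam : ℕ → ℝ) (κ : ℝ) : ℝ := ∑' i, lam i / (lam i + κ)

section degreesOfFreedom

variable {lam : ℕ → ℝ} {κ : ℝ}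

lemma div_add_le_one {a κ : ℝ} (ha : 0 ≤ a) (hκ : 0 < κ) : a / (a + κ) ≤ 1 :=
  (div_le_one (by positivity)).mpr (by linarith)

lemma div_add_le_div {a κ : ℝ} (ha : 0 ≤ a) (hκ : 0 < κ) : a / (a + κ) ≤ a / κ := by
  gcongr; linarith

lemma summable_div_add (hlam : ∀ i, 0 ≤ lam i) (hs : Summable lam) (hκ : 0 < κ) :
    Summable fun i ↦ lam i / (lam i + κ) :=
  (hs.div_const κ).of_nonneg_of_le (fun i ↦ div_nonneg (hlam i) (by linarith [hlam i]))
    fun i ↦ div_add_le_div (hlam i) hκ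

lemma degreesOfFreedom_nonneg (hlam : ∀ i, 0 ≤ lam i) (hκ : 0 < κ) :
    0 ≤ degreesOfFreedom lam κ :=
  tsum_nonneg fun i ↦ div_nonneg (hlam i) (by linarith [hlam i])

lemma degreesOfFreedom_le (hlam : ∀ i, 0 ≤ lam i) (hs : Summable lam) (hκ : 0 < κ) (N : ℕ) :
    degreesOfFreedom lam κ ≤ N + (∑' i, lam (i + N)) / κ := by
  have hsum := summable_div_add hlam hs hκ
  rw [degreesOfFreedom, ← hsum.sum_add_tsum_nat_add N, ← tsum_div_const]
  refine add_le_add ?_ (Summable.tsum_le_tsum (fun i ↦ div_add_le_div (hlam _) hκ)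
    ((summable_nat_add_iff N).mpr hsum) (((summable_nat_add_iff N).mpr hs).div_const κ))
  calc ∑ i ∈ Finset.range N, lam i / (lam i + κ) ≤ ∑ _i ∈ Finset.range N, (1 : ℝ) :=
        Finset.sum_le_sum fun i _ ↦ div_add_le_one (hlam i) hκ
    _ = N := by simp

lemma le_degreesOfFreedom (hlam : ∀ i, 0 ≤ lam i) (hs : Summable lam) (hκ : 0 < κ) {N : ℕ}
    (hN : ∀ i < N, κ ≤ lam i) : (N : ℝ) / 2 ≤ degreesOfFreedom lam κ :=
  calc (N : ℝ) / 2 = ∑ _i ∈ Finset.range N, (1 / 2 : ℝ) := by simp; ring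
    _ ≤ ∑ i ∈ Finset.range N, lam i / (lam i + κ) := Finset.sum_le_sum fun i hi ↦ by
        rw [le_div_iff₀ (by linarith [hlam i])]; linarith [hN i (Finset.mem_range.mp hi)]
    _ ≤ degreesOfFreedom lam κ := (summable_div_add hlam hs hκ).sum_le_tsum _
        fun i _ ↦ div_nonneg (hlam i) (by linarith [hlam i])

end degreesOfFreedom

noncomputable def powerLaw (γ : ℝ) (i : ℕ) : ℝ := ((i : ℝ) + 1) ^ (-(1 + γ))

section powerLaw

variable {γ : ℝ}

lemma powerLaw_pos (γ : ℝ) (i : ℕ) : 0 < powerLaw γ i := by unfold powerLaw; positivity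

lemma summable_powerLaw (hγ : 0 < γ) : Summable (powerLaw γ) := by
  have := (summable_nat_add_iff 1).mpr (Real.summable_nat_rpow.mpr (by linarith : -(1 + γ) < -1))
  exact this.congr fun i ↦ by simp [powerLaw]

lemma tsum_powerLaw_tail_le (hγ : 0 < γ) (N : ℕ) :
    ∑' i, powerLaw γ (i + N) ≤ (1 + 1 / γ) * ((N : ℝ) + 1) ^ (-γ) := by
  have hanti : AntitoneOn (fun t : ℝ ↦ t ^ (-(1 + γ))) (Ici ((N + 1 : ℕ) : ℝ)) :=
    fun s hs t _ hst ↦ rpow_le_rpow_of_nonpos (by simp at hs; linarith) hst (by linarith)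
  have htail := hanti.tsum_comp_add_le_integral (N + 1)
    (integrableOn_Ioi_rpow_of_lt (by linarith) (by positivity))
    (fun t ht ↦ rpow_nonneg (by simp at ht; linarith) _)
  rw [integral_Ioi_rpow_of_lt (by linarith) (by positivity)] at htail
  have hhead : powerLaw γ N ≤ ((N : ℝ) + 1) ^ (-γ) :=
    rpow_le_rpow_of_exponent_le (by linarith [N.cast_nonneg (α := ℝ)]) (by linarith)
  rw [((summable_nat_add_iff N).mpr (summable_powerLaw hγ)).tsum_eq_zero_add]
  have hshift : ∑' i, powerLaw γ (i + 1 + N) ≤ ((N : ℝ) + 1) ^ (-γ) / γ := by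
    convert htail using 1
    · congr 1 with i
      simp only [powerLaw]
      push_cast
      ring_nf
    · push_cast
      rw [show -(1 + γ) + 1 = -γ by ring, neg_div_neg_eq]
  rw [zero_add, add_mul, one_mul, one_div_mul_eq_div]
  exact add_le_add hhead hshift

lemma degreesOfFreedom_powerLaw_le (hγ : 0 < γ) {κ : ℝ} (hκ : 0 < κ) :
    degreesOfFreedom (powerLaw γ) κ ≤ (2 + 1 / γ) * κ ^ (-(1 + γ))⁻¹ := by
  set x := κ ^ (-(1 + γ))⁻¹
  have hx : 0 < x := by positivity
  have hxκ : x ^ (-γ) / κ = x := by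
    rw [div_eq_iff hκ.ne', ← rpow_inv_rpow hκ.le (by linarith : -(1 + γ) ≠ 0),
      ← rpow_one_add' hx.le (by linarith)]
    ring_nf
  have hNx : (⌊x⌋₊ : ℝ) ≤ x := Nat.floor_le hx.le
  have htail : ((⌊x⌋₊ : ℝ) + 1) ^ (-γ) ≤ x ^ (-γ) :=
    rpow_le_rpow_of_nonpos hx (Nat.lt_floor_add_one x).le (by linarith)
  calc degreesOfFreedom (powerLaw γ) κ
      ≤ ⌊x⌋₊ + (∑' i, powerLaw γ (i + ⌊x⌋₊)) / κ :=
        degreesOfFreedom_le (fun i ↦ (powerLaw_pos γ i).le) (summable_powerLaw hγ) hκ _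
    _ ≤ x + (1 + 1 / γ) * x ^ (-γ) / κ := by
        gcongr
        exact (tsum_powerLaw_tail_le hγ _).trans (by gcongr)
    _ = (2 + 1 / γ) * x := by rw [mul_div_assoc, hxκ]; ring

lemma le_degreesOfFreedom_powerLaw (hγ : 0 < γ) {κ : ℝ} (hκ : 0 < κ) :
    (κ ^ (-(1 + γ))⁻¹ - 1) / 2 ≤ degreesOfFreedom (powerLaw γ) κ := by
  set x := κ ^ (-(1 + γ))⁻¹
  have hx : 0 < x := by positivity
  have hN : ∀ i < ⌊x⌋₊, κ ≤ powerLaw γ i := fun i hi ↦ by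
    have hix : (i : ℝ) + 1 ≤ x := by exact_mod_cast (Nat.le_floor_iff hx.le).mp hi
    rw [← rpow_inv_rpow hκ.le (by linarith : -(1 + γ) ≠ 0)]
    exact rpow_le_rpow_of_nonpos (by positivity) hix (by linarith)
  have := le_degreesOfFreedom (fun i ↦ (powerLaw_pos γ i).le) (summable_powerLaw hγ) hκ hN
  linarith [Nat.lt_floor_add_one x]

lemma rpow_mul_le_of_degreesOfFreedom_le (hγ : 0 < γ) {κ M : ℝ} (hκ : 0 < κ) (hM : 1 ≤ M)
    (h : degreesOfFreedom (powerLaw γ) κ ≤ M) : 3 ^ (-(1 + γ)) * M ^ (-(1 + γ)) ≤ κ := by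
  have hx : κ ^ (-(1 + γ))⁻¹ ≤ 3 * M := by linarith [le_degreesOfFreedom_powerLaw hγ hκ]
  rw [← mul_rpow (by norm_num) (by linarith)]
  exact (rpow_inv_le_iff_of_neg hκ (by linarith) (by linarith)).mp hx

lemma le_rpow_mul_of_le_degreesOfFreedom (hγ : 0 < γ) {κ M : ℝ} (hκ : 0 < κ) (hM : 0 < M)
    (h : M ≤ 2 * degreesOfFreedom (powerLaw γ) κ) :
    κ ≤ (2 * (2 + 1 / γ)) ^ (1 + γ) * M ^ (-(1 + γ)) := by
  have hB : 0 < 2 * (2 + 1 / γ) := by positivity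
  have hx : M / (2 * (2 + 1 / γ)) ≤ κ ^ (-(1 + γ))⁻¹ := by
    rw [div_le_iff₀ hB]
    linarith [degreesOfFreedom_powerLaw_le hγ hκ]
  have := (le_rpow_inv_iff_of_neg (by positivity) hκ (by linarith)).mp hx
  rwa [div_rpow hM.le hB.le, rpow_neg hB.le, div_inv_eq_mul, mul_comm] at this

end powerLaw

lemma bounds_of_div_add_div_eq_one {a b κ M : ℝ} (ha : 0 < a) (hb : 0 ≤ b) (hκ : 0 < κ)
    (hM : 0 < M) (h : a / κ + b / M = 1) : a ≤ κ ∧ b ≤ M ∧ (κ ≤ 2 * a ∨ M ≤ 2 * b) := by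
  have ha' : 0 < a / κ := by positivity
  have hb' : 0 ≤ b / M := by positivity
  refine ⟨(div_le_one hκ).mp (by linarith), (div_le_one hM).mp (by linarith), ?_⟩
  rcases le_total (1 / 2) (a / κ) with h' | h'
  · rw [le_div_iff₀ hκ] at h'
    left; linarith
  · have : 1 / 2 ≤ b / M := by linarith
    rw [le_div_iff₀ hM] at this
    right; linarith

/-- With power-law eigenvalues λ_i = i^{-1-γ}, the effective regularizer κ
(the positive solution of λ/κ + (1/M)Σᵢ λᵢ/(λᵢ+κ) = 1) satisfies
κ = Θ(max(λ, M^{-1-γ})), with constants depending only on γ. -/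
theorem stmt13 (γ : ℝ) (hγ : 0 < γ) :
    ∃ c C : ℝ, 0 < c ∧ 0 < C ∧
      ∀ lam M κ : ℝ, lam ∈ Set.Ioo (0:ℝ) 1 → 1 ≤ M → 0 < κ →
        lam / κ +
            (1 / M) * ∑' i : ℕ,
              ((i : ℝ) + 1) ^ (-(1 + γ)) / (((i : ℝ) + 1) ^ (-(1 + γ)) + κ) = 1 →
        c * max lam (M ^ (-(1 + γ))) ≤ κ ∧ κ ≤ C * max lam (M ^ (-(1 + γ))) := by
  refine ⟨3 ^ (-(1 + γ)), max 2 ((2 * (2 + 1 / γ)) ^ (1 + γ)), by positivity, by positivity, ?_⟩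
  rintro lam M κ ⟨hlam, -⟩ hM hκ heq
  change lam / κ + 1 / M * degreesOfFreedom (powerLaw γ) κ = 1 at heq
  rw [one_div_mul_eq_div] at heq
  have hM0 : 0 < M := by linarith
  have hMp : 0 < M ^ (-(1 + γ)) := by positivity
  obtain ⟨hlamκ, hdfM, hsplit⟩ := bounds_of_div_add_div_eq_one hlam
    (degreesOfFreedom_nonneg (fun i ↦ (powerLaw_pos γ i).le) hκ) hκ hM0 heq
  constructor
  · have hc : (3 : ℝ) ^ (-(1 + γ)) ≤ 1 := rpow_le_one_of_one_le_of_nonpos (by norm_num) (by linarith)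
    rw [mul_max_of_nonneg _ _ (by positivity)]
    exact max_le (by nlinarith) (rpow_mul_le_of_degreesOfFreedom_le hγ hκ hM hdfM)
  · rcases hsplit with h | h
    · exact h.trans (mul_le_mul (le_max_left _ _) (le_max_left _ _) hlam.le (by positivity))
    · exact (le_rpow_mul_of_le_degreesOfFreedom hγ hκ hM0 h).trans
        (mul_le_mul (le_max_right _ _) (le_max_right _ _) hMp.le (by positivity))
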